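/- arXiv:1809.09020 — 2 statements merged into one kernel-verified Lean document; each statement's English description precedes it below -/
import Mathlib

section
/- Let Γ₁, Γ₂, Γ₃ be nonzero reals with Γ₃ ≠ 0, and consider the quadratic form on ℂ² given by q(v₁,v₂) = (Γ₁/Γ₃)(Γ₁+Γ₃)|v₁|² + (Γ₁Γ₂/Γ₃)(v₁·conj(v₂) + conj(v₁)·v₂) + (Γ₂/Γ₃)(Γ₂+Γ₃)|v₂|². Then q is definite if and only if (Γ₁Γ₂/Γ₃)(Γ₁+Γ₂+Γ₃) > 0. -/
/-!
Writing `q(v) = A|v₁|² + 2B Re(v₁ v̄₂) + C|v₂|²`, completing the square gives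
`A q(v) = |A v₁ + B v₂|² + (AC - B²)|v₂|²`, so `q` is definite exactly when its discriminant
`AC - B²` is positive; the test vectors `(1, 0)` and `(-B, A)` witness the converse. For the
vertex `a` the discriminant is `(Γ₁Γ₂/Γ₃)(Γ₁ + Γ₂ + Γ₃)`.
-/

open Complex ComplexConjugate

def binaryHermitianForm (A B C : ℝ) (v₁ v₂ : ℂ) : ℝ :=
  A * normSq v₁ + B * (v₁ * conj v₂ + conj v₁ * v₂).re + C * normSq v₂

namespace binaryHermitianForm

variable {A B C : ℝ}

theorem apply_one_zero (A B C : ℝ) : binaryHermitianForm A B C 1 0 = A := by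
  simp [binaryHermitianForm]

theorem apply_neg_B_A (A B C : ℝ) :
    binaryHermitianForm A B C (-B) A = A * (A * C - B * B) := by
  simp [binaryHermitianForm, normSq_apply]
  ring

theorem mul_eq_normSq_add (A B C : ℝ) (v₁ v₂ : ℂ) :
    A * binaryHermitianForm A B C v₁ v₂
      = normSq (A * v₁ + B * v₂) + (A * C - B * B) * normSq v₂ := by
  simp only [binaryHermitianForm, normSq_apply, add_re, add_im, mul_re, mul_im, conj_re,
    conj_im, ofReal_re, ofReal_im]
  ring

theorem mul_pos_of_discr_pos (hD : 0 < A * C - B * B) {v₁ v₂ : ℂ} (hv : (v₁, v₂) ≠ (0, 0)) :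
    0 < A * binaryHermitianForm A B C v₁ v₂ := by
  rw [mul_eq_normSq_add]
  rcases eq_or_ne v₂ 0 with rfl | hv₂
  · have hA : A ≠ 0 := by rintro rfl; nlinarith [mul_self_nonneg B]
    have hv₁ : v₁ ≠ 0 := by rintro rfl; exact hv rfl
    simp [hA, hv₁]
  · exact add_pos_of_nonneg_of_pos (normSq_nonneg _) (mul_pos hD (normSq_pos.2 hv₂))

theorem definite_iff_discr_pos :
    ((∀ v₁ v₂ : ℂ, (v₁, v₂) ≠ (0, 0) → 0 < binaryHermitianForm A B C v₁ v₂) ∨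
      (∀ v₁ v₂ : ℂ, (v₁, v₂) ≠ (0, 0) → binaryHermitianForm A B C v₁ v₂ < 0))
    ↔ 0 < A * C - B * B := by
  constructor
  · intro hdef
    have hA : A ≠ 0 := by
      rw [← apply_one_zero A B C]
      rcases hdef with h | h
      exacts [(h 1 0 (by simp)).ne', (h 1 0 (by simp)).ne]
    have htest : ((-B : ℂ), (A : ℂ)) ≠ (0, 0) := by simp [hA]
    have hprod : 0 < binaryHermitianForm A B C 1 0 * binaryHermitianForm A B C (-B) A := by
      rcases hdef with h | h
      exacts [mul_pos (h 1 0 (by simp)) (h _ _ htest),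
        mul_pos_of_neg_of_neg (h 1 0 (by simp)) (h _ _ htest)]
    rw [apply_one_zero, apply_neg_B_A, ← mul_assoc] at hprod
    exact pos_of_mul_pos_right hprod (mul_self_nonneg A)
  · intro hD
    rcases (show A ≠ 0 by rintro rfl; nlinarith [mul_self_nonneg B]).lt_or_gt with hA | hA
    · exact Or.inr fun v₁ v₂ hv => neg_of_mul_pos_right (mul_pos_of_discr_pos hD hv) hA.le
    · exact Or.inl fun v₁ v₂ hv => pos_of_mul_pos_right (mul_pos_of_discr_pos hD hv) hA.le

end binaryHermitianForm

theorem vertex_a_discr (Γ₁ Γ₂ Γ₃ : ℝ) :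
    Γ₁ / Γ₃ * (Γ₁ + Γ₃) * (Γ₂ / Γ₃ * (Γ₂ + Γ₃)) - Γ₁ * Γ₂ / Γ₃ * (Γ₁ * Γ₂ / Γ₃)
      = Γ₁ * Γ₂ / Γ₃ * (Γ₁ + Γ₂ + Γ₃) := by
  rcases eq_or_ne Γ₃ 0 with rfl | h₃
  · simp
  · field_simp
    ring

theorem vertex_a_definite_iff_general (Γ₁ Γ₂ Γ₃ : ℝ) :
    ((∀ v₁ v₂ : ℂ, (v₁, v₂) ≠ (0, 0) →
        0 < Γ₁ / Γ₃ * (Γ₁ + Γ₃) * Complex.normSq v₁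
            + Γ₁ * Γ₂ / Γ₃ * (v₁ * (starRingEnd ℂ) v₂ + (starRingEnd ℂ) v₁ * v₂).re
            + Γ₂ / Γ₃ * (Γ₂ + Γ₃) * Complex.normSq v₂) ∨
     (∀ v₁ v₂ : ℂ, (v₁, v₂) ≠ (0, 0) →
        Γ₁ / Γ₃ * (Γ₁ + Γ₃) * Complex.normSq v₁
            + Γ₁ * Γ₂ / Γ₃ * (v₁ * (starRingEnd ℂ) v₂ + (starRingEnd ℂ) v₁ * v₂).re
            + Γ₂ / Γ₃ * (Γ₂ + Γ₃) * Complex.normSq v₂ < 0))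
    ↔ 0 < Γ₁ * Γ₂ / Γ₃ * (Γ₁ + Γ₂ + Γ₃) := by
  rw [← vertex_a_discr]
  exact binaryHermitianForm.definite_iff_discr_pos

/-- Discriminant condition (D) at the vertex `a`: the quadratic form
`q(v₁,v₂) = (Γ₁/Γ₃)(Γ₁+Γ₃)|v₁|² + (Γ₁Γ₂/Γ₃)(v₁ v̄₂ + v̄₁ v₂) + (Γ₂/Γ₃)(Γ₂+Γ₃)|v₂|²`
on `ℂ²` is definite if and only if `(Γ₁Γ₂/Γ₃)(Γ₁+Γ₂+Γ₃) > 0`. -/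
theorem vertex_a_definite_iff (Γ₁ Γ₂ Γ₃ : ℝ) (h₁ : Γ₁ ≠ 0) (h₂ : Γ₂ ≠ 0) (h₃ : Γ₃ ≠ 0) :
    ((∀ v₁ v₂ : ℂ, (v₁, v₂) ≠ (0, 0) →
        0 < Γ₁ / Γ₃ * (Γ₁ + Γ₃) * Complex.normSq v₁
            + Γ₁ * Γ₂ / Γ₃ * (v₁ * (starRingEnd ℂ) v₂ + (starRingEnd ℂ) v₁ * v₂).re
            + Γ₂ / Γ₃ * (Γ₂ + Γ₃) * Complex.normSq v₂) ∨
     (∀ v₁ v₂ : ℂ, (v₁, v₂) ≠ (0, 0) →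
        Γ₁ / Γ₃ * (Γ₁ + Γ₃) * Complex.normSq v₁
            + Γ₁ * Γ₂ / Γ₃ * (v₁ * (starRingEnd ℂ) v₂ + (starRingEnd ℂ) v₁ * v₂).re
            + Γ₂ / Γ₃ * (Γ₂ + Γ₃) * Complex.normSq v₂ < 0))
    ↔ 0 < Γ₁ * Γ₂ / Γ₃ * (Γ₁ + Γ₂ + Γ₃) :=
  vertex_a_definite_iff_general Γ₁ Γ₂ Γ₃
end

section
/- Let G be a compact Lie group acting smoothly on a symplectic manifold (M, Ω) with momentum map J : M → 𝔤* satisfying ⟨DJₘ(v), ξ⟩ = Ω(ξ_M(m), v) for all ξ ∈ 𝔤 and v ∈ TₘM. Then for each m ∈ M the image of DJₘ equals the annihilator in 𝔤* of the Lie algebra 𝔤ₘ of the stabilizer of m (the bifurcation lemma). -/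
/-! `DJ` factors as `act.dualMap ∘ Ω.flip`, and `Ω.flip : T → T*` is onto because `Ω` is
injective and `T` is finite-dimensional; hence `range DJ = range act.dualMap`, which is the
annihilator of `ker act = 𝔤ₘ`. -/

theorem bifurcation_lemma_general
    (g T : Type*) [AddCommGroup g] [Module ℝ g]
    [AddCommGroup T] [Module ℝ T] [FiniteDimensional ℝ T]
    (Ω : T →ₗ[ℝ] T →ₗ[ℝ] ℝ)
    (hnondeg : ∀ v : T, (∀ w : T, Ω v w = 0) → v = 0)
    (act : g →ₗ[ℝ] T)
    (DJ : T →ₗ[ℝ] Module.Dual ℝ g)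
    (hDJ : ∀ (v : T) (ξ : g), DJ v ξ = Ω (act ξ) v) :
    LinearMap.range DJ = (LinearMap.ker act).dualAnnihilator := by
  have hΩ_inj : Function.Injective Ω :=
    LinearMap.ker_eq_bot.mp <| LinearMap.ker_eq_bot'.mpr fun v hv ↦
      hnondeg v fun w ↦ LinearMap.congr_fun hv w
  have hΩ_flip_surj : LinearMap.range Ω.flip = ⊤ :=
    LinearMap.range_eq_top.mpr (LinearMap.flip_surjective_iff₁.mpr hΩ_inj)
  have hDJ_eq : DJ = act.dualMap ∘ₗ Ω.flip := by
    ext v ξ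
    exact hDJ v ξ
  rw [hDJ_eq, LinearMap.range_comp_of_range_eq_top _ hΩ_flip_surj,
    LinearMap.range_dualMap_eq_dualAnnihilator_ker]

/-- The bifurcation lemma, at a point `m` of a Hamiltonian `G`-space. The data at `m` is
purely linear-algebraic: `T = TₘM` carries the (nondegenerate, skew-symmetric) symplectic
form `Ω`, the infinitesimal action is the linear map `act : 𝔤 → T`, `ξ ↦ ξ_M(m)` (whose
kernel is `𝔤ₘ`, the Lie algebra of the stabilizer of `m`), and the derivative of the
momentum map `DJ : T → 𝔤*` satisfies the defining relation `⟨DJ(v), ξ⟩ = Ω(ξ_M(m), v)`.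
Conclusion: the image of `DJₘ` equals the annihilator `𝔤ₘ°` of `𝔤ₘ` in `𝔤*`. -/
theorem bifurcation_lemma
    (g T : Type*) [AddCommGroup g] [Module ℝ g] [FiniteDimensional ℝ g]
    [AddCommGroup T] [Module ℝ T] [FiniteDimensional ℝ T]
    [LieRing g] [LieAlgebra ℝ g]
    (Ω : T →ₗ[ℝ] T →ₗ[ℝ] ℝ)
    (hskew : ∀ v w : T, Ω v w = -Ω w v)
    (hnondeg : ∀ v : T, (∀ w : T, Ω v w = 0) → v = 0)
    (act : g →ₗ[ℝ] T)
    (DJ : T →ₗ[ℝ] Module.Dual ℝ g)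
    (hDJ : ∀ (v : T) (ξ : g), DJ v ξ = Ω (act ξ) v) :
    LinearMap.range DJ = (LinearMap.ker act).dualAnnihilator :=
  bifurcation_lemma_general g T Ω hnondeg act DJ hDJ
end
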